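/- arXiv:2510.18933 — 2 statements merged into one kernel-verified Lean document; each statement's English description precedes it below -/
import Mathlib

section
/- (Pointwise sufficient condition, feature-label, ε = 0.) Let P = α₁·P₁ + α₂·P₂ + (1−α)·P₀ with α₁ > 0, α₂ ≥ 0, α = α₁ + α₂ ≤ 1, where P₁ is the feature-label collective distribution with target y₁* and signal map g₁, and P₂ is an arbitrary PMF on X × Y. Let x ∈ X₁ satisfy P₁(x) > 0. If α₁·P₁(x) > α₂·P₂(x)·Δ_{P₂,x}(y₁*) + (1−α)·P₀(x)·Δ_{P₀,x}(y₁*), then the mixture satisfies P(x, y₁*) > P(x, y) for every y ≠ y₁*; in particular, any classifier f with f(x') maximizing y ↦ P(y|x') for all x' with P(x') > 0 satisfies f(x) = y₁*. -/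
open Finset

noncomputable section

variable {X Y : Type*}

/-- A probability mass function on `X × Y`. -/
def IsPMF [Fintype X] [Fintype Y] (P : X × Y → ℝ) : Prop :=
  (∀ z, 0 ≤ P z) ∧ ∑ z, P z = 1

/-- The `X`-marginal `P(x) = ∑_y P(x,y)`. -/
def marg [Fintype Y] (P : X × Y → ℝ) (x : X) : ℝ := ∑ y, P (x, y)

/-- The conditional probability `P(y | x) = P(x,y) / P(x)` (zero when `P(x) = 0`,
by the `division by zero = 0` convention). -/
def condProb [Fintype Y] (P : X × Y → ℝ) (y : Y) (x : X) : ℝ := P (x, y) / marg P x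

/-- Pointwise suboptimality gap `Δ_{Q,x}(y*) = max_y Q(y|x) − Q(y*|x)` when `Q(x) > 0`,
and `0` otherwise. -/
def gapAt [Fintype Y] [Nonempty Y] (Q : X × Y → ℝ) (x : X) (ystar : Y) : ℝ :=
  if 0 < marg Q x then
    (Finset.univ.sup' Finset.univ_nonempty fun y => condProb Q y x) - condProb Q ystar x
  else 0

/-- Suboptimality gap `Δ_Q(X₁, y*) = max_{x ∈ X₁} Δ_{Q,x}(y*)` of the signal set
`X₁ = g(X)` on `Q`. -/
def gapSig [Fintype X] [Fintype Y] [Nonempty X] [Nonempty Y] [DecidableEq X]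
    (Q : X × Y → ℝ) (g : X → X) (ystar : Y) : ℝ :=
  (Finset.univ.image g).sup' (Finset.univ_nonempty.image g) fun x => gapAt Q x ystar

/-- Overlap `Q(X₁) = ∑_{x ∈ X₁} Q(x)` of `Q` with the signal set `X₁ = g(X)`. -/
def overlap [Fintype X] [Fintype Y] [DecidableEq X] (Q : X × Y → ℝ) (g : X → X) : ℝ :=
  ∑ x ∈ Finset.univ.image g, marg Q x

/-- Total variation distance between two PMFs on `X × Y`. -/
def tvDist [Fintype X] [Fintype Y] (P P' : X × Y → ℝ) : ℝ :=
  (1 / 2) * ∑ z, |P z - P' z|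

/-- A classifier `f` is `ε`-suboptimal under `P` if there is a PMF `P'` within total
variation `ε` of `P` such that `f x` maximizes `y ↦ P'(y|x)` for every `x` with
`P'(x) > 0`. -/
def Suboptimal [Fintype X] [Fintype Y] (P : X × Y → ℝ) (ε : ℝ) (f : X → Y) : Prop :=
  ∃ P' : X × Y → ℝ, IsPMF P' ∧ tvDist P P' ≤ ε ∧
    ∀ x, 0 < marg P' x → ∀ y, condProb P' y x ≤ condProb P' (f x) x

/-- Pushforward of `P` along a map `m : X × Y → X × Y`. -/
def pushforward [Fintype X] [Fintype Y] [DecidableEq X] [DecidableEq Y]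
    (m : X × Y → X × Y) (P : X × Y → ℝ) : X × Y → ℝ :=
  fun z => ∑ w ∈ Finset.univ.filter (fun w => m w = z), P w

/-- Success rate `S = Pr_{x ∼ P₀-X-marginal}[f (g x) = y*]`. -/
def successRate [Fintype X] [Fintype Y] [DecidableEq Y]
    (P0 : X × Y → ℝ) (f : X → Y) (g : X → X) (ystar : Y) : ℝ :=
  ∑ x ∈ Finset.univ.filter (fun x => f (g x) = ystar), marg P0 x

/-- Mass `P₀(g⁻¹({x*}))` of the preimage of `x*` under the `X`-marginal of `P₀`. -/
def preMass [Fintype X] [Fintype Y] [DecidableEq X]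
    (P0 : X × Y → ℝ) (g : X → X) (xstar : X) : ℝ :=
  ∑ x ∈ Finset.univ.filter (fun x => g x = xstar), marg P0 x

section

variable [Fintype Y]

lemma apply_le_marg {Q : X × Y → ℝ} (hQ : ∀ z, 0 ≤ Q z) (x : X) (y : Y) :
    Q (x, y) ≤ marg Q x :=
  single_le_sum (fun y _ => hQ (x, y)) (mem_univ y)

lemma marg_eq_apply_of_forall_ne {Q : X × Y → ℝ} {x : X} {ystar : Y}
    (h : ∀ y, y ≠ ystar → Q (x, y) = 0) : marg Q x = Q (x, ystar) :=
  sum_eq_single ystar (fun y _ hy => h y hy) (absurd (mem_univ ystar))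

lemma sub_le_marg_mul_gapAt [Nonempty Y] {Q : X × Y → ℝ} (hQ : ∀ z, 0 ≤ Q z) (x : X)
    (ystar y : Y) : Q (x, y) - Q (x, ystar) ≤ marg Q x * gapAt Q x ystar := by
  unfold gapAt
  split_ifs with hx
  · have hle : condProb Q y x ≤ univ.sup' univ_nonempty fun y => condProb Q y x :=
      le_sup' (fun y => condProb Q y x) (mem_univ y)
    calc Q (x, y) - Q (x, ystar) = marg Q x * (condProb Q y x - condProb Q ystar x) := by
          simp only [condProb]; field_simp
      _ ≤ _ := by gcongr
  · have hm : marg Q x = 0 := le_antisymm (not_lt.mp hx) (sum_nonneg fun _ _ => hQ _)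
    have hzero : ∀ y', Q (x, y') = 0 := fun y' =>
      le_antisymm (hm ▸ apply_le_marg hQ x y') (hQ _)
    simp [hzero, hm]

lemma mixture_apply_lt_of_gapAt [Nonempty Y] {R₁ R₂ R₀ : X × Y → ℝ} {a₁ a₂ a₀ : ℝ}
    (ha₂ : 0 ≤ a₂) (ha₀ : 0 ≤ a₀) (hR₂ : ∀ z, 0 ≤ R₂ z) (hR₀ : ∀ z, 0 ≤ R₀ z)
    {x : X} {ystar y : Y} (hR₁ : R₁ (x, y) = 0)
    (hmargin : a₂ * marg R₂ x * gapAt R₂ x ystar + a₀ * marg R₀ x * gapAt R₀ x ystar <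
      a₁ * R₁ (x, ystar)) :
    a₁ * R₁ (x, y) + a₂ * R₂ (x, y) + a₀ * R₀ (x, y) <
      a₁ * R₁ (x, ystar) + a₂ * R₂ (x, ystar) + a₀ * R₀ (x, ystar) := by
  have h₂ := mul_le_mul_of_nonneg_left (sub_le_marg_mul_gapAt hR₂ x ystar y) ha₂
  have h₀ := mul_le_mul_of_nonneg_left (sub_le_marg_mul_gapAt hR₀ x ystar y) ha₀
  rw [hR₁]
  linarith

lemma eq_of_forall_condProb_le {Q : X × Y → ℝ} {x : X} {ystar y₀ : Y} (hx : 0 < marg Q x)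
    (hlt : ∀ y, y ≠ ystar → Q (x, ystar) > Q (x, y))
    (hmax : ∀ y, condProb Q y x ≤ condProb Q y₀ x) : y₀ = ystar := by
  by_contra hne
  exact (hlt y₀ hne).not_ge ((div_le_div_iff_of_pos_right hx).mp (hmax ystar))

end

section

variable [Fintype X] [Fintype Y] [DecidableEq X] [DecidableEq Y]

lemma pushforward_nonneg {m : X × Y → X × Y} {P : X × Y → ℝ} (hP : ∀ z, 0 ≤ P z)
    (z : X × Y) : 0 ≤ pushforward m P z :=
  sum_nonneg fun w _ => hP w

lemma pushforward_eq_zero_of_notMem_range {m : X × Y → X × Y} (P : X × Y → ℝ) {z : X × Y}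
    (hz : z ∉ Set.range m) : pushforward m P z = 0 :=
  sum_eq_zero fun w hw => absurd ⟨w, (mem_filter.mp hw).2⟩ hz

end

theorem pointwise_feature_label_eps_zero_general
    [Fintype X] [Fintype Y] [Nonempty Y] [DecidableEq X] [DecidableEq Y]
    (P0 P2 : X × Y → ℝ) (hP0 : IsPMF P0) (hP2 : IsPMF P2)
    (g1 : X → X) (y1 : Y)
    (P1 : X × Y → ℝ) (hP1 : P1 = pushforward (fun w => (g1 w.1, y1)) P0)
    (α1 α2 : ℝ) (hα1 : 0 < α1) (hα2 : 0 ≤ α2) (hα : α1 + α2 ≤ 1)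
    (P : X × Y → ℝ) (hP : P = fun z => α1 * P1 z + α2 * P2 z + (1 - (α1 + α2)) * P0 z)
    (x : X) (hx1 : 0 < marg P1 x)
    (hcond : α1 * marg P1 x >
      α2 * marg P2 x * gapAt P2 x y1 + (1 - (α1 + α2)) * marg P0 x * gapAt P0 x y1) :
    (∀ y, y ≠ y1 → P (x, y1) > P (x, y)) ∧
    (∀ f : X → Y,
      (∀ x', 0 < marg P x' → ∀ y, condProb P y x' ≤ condProb P (f x') x') → f x = y1) := by
  have hP1_off : ∀ y, y ≠ y1 → P1 (x, y) = 0 := fun y hy =>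
    hP1 ▸ pushforward_eq_zero_of_notMem_range P0 fun ⟨_, hw⟩ => hy (congrArg Prod.snd hw).symm
  have hP1x : marg P1 x = P1 (x, y1) := marg_eq_apply_of_forall_ne hP1_off
  have hα0 : 0 ≤ 1 - (α1 + α2) := sub_nonneg.mpr hα
  have hwin : ∀ y, y ≠ y1 → P (x, y1) > P (x, y) := fun y hy => hP ▸
    mixture_apply_lt_of_gapAt hα2 hα0 hP2.1 hP0.1 (hP1_off y hy) (hP1x ▸ hcond)
  refine ⟨hwin, fun f hf => ?_⟩
  have hP1_nonneg : ∀ z, 0 ≤ P1 z := hP1 ▸ pushforward_nonneg hP0.1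
  have hP_nonneg : ∀ z, 0 ≤ P z := fun z => by
    have := hP0.1 z; have := hP2.1 z; have := hP1_nonneg z
    rw [hP]; positivity
  have hPx : 0 < marg P x := by
    have hP1y1 : 0 < P1 (x, y1) := hP1x ▸ hx1
    have := hP0.1 (x, y1); have := hP2.1 (x, y1)
    refine lt_of_lt_of_le ?_ (apply_le_marg hP_nonneg x y1)
    rw [hP]; positivity
  exact eq_of_forall_condProb_le hPx hwin (hf x hPx)

/-- pointwise sufficient condition, feature-label, ε = 0. -/
theorem pointwise_feature_label_eps_zero
    [Fintype X] [Fintype Y] [Nonempty X] [Nonempty Y] [DecidableEq X] [DecidableEq Y]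
    (P0 P2 : X × Y → ℝ) (hP0 : IsPMF P0) (hP2 : IsPMF P2)
    (g1 : X → X) (hg1 : Function.Injective g1) (y1 : Y)
    (P1 : X × Y → ℝ) (hP1 : P1 = pushforward (fun w => (g1 w.1, y1)) P0)
    (α1 α2 : ℝ) (hα1 : 0 < α1) (hα2 : 0 ≤ α2) (hα : α1 + α2 ≤ 1)
    (P : X × Y → ℝ) (hP : P = fun z => α1 * P1 z + α2 * P2 z + (1 - (α1 + α2)) * P0 z)
    (x : X) (hx : x ∈ Finset.univ.image g1) (hx1 : 0 < marg P1 x)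
    (hcond : α1 * marg P1 x >
      α2 * marg P2 x * gapAt P2 x y1 + (1 - (α1 + α2)) * marg P0 x * gapAt P0 x y1) :
    (∀ y, y ≠ y1 → P (x, y1) > P (x, y)) ∧
    (∀ f : X → Y,
      (∀ x', 0 < marg P x' → ∀ y, condProb P y x' ≤ condProb P (f x') x') → f x = y1) :=
  pointwise_feature_label_eps_zero_general P0 P2 hP0 hP2 g1 y1 P1 hP1 α1 α2 hα1 hα2 hα P hP x hx1
    hcond
end
end

section
/- (Success bound, feature-label, ε = 0, two distributions.) Let P = α₁·P₁ + α₂·P₂ + (1−α)·P₀ with α₁ > 0, α₂ ≥ 0, α = α₁ + α₂ ≤ 1, where P₁ is the feature-label collective distribution with target y₁* and signal map g₁, and P₂ is an arbitrary PMF on X × Y. If f : X → Y satisfies f(x) maximizes y ↦ P(y|x) for every x with P(x) > 0, then the success rate S = Pr_{x ∼ P₀-X-marginal}[f(g₁(x)) = y₁*] satisfies S ≥ 1 − (α₂/α₁) · P₂(X₁) · Δ_{P₂}(X₁,y₁*) − ((1−α)/α₁) · P₀(X₁) · Δ_{P₀}(X₁,y₁*). -/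
open Finset

noncomputable section

variable {X Y : Type*}

lemma gapAt_nonneg' [Fintype Y] [Nonempty Y] (Q : X × Y → ℝ) (x : X) (y1 : Y) :
    0 ≤ gapAt Q x y1 := by
  unfold gapAt
  split
  · simp only [sub_nonneg]
    exact Finset.le_sup' (fun y => condProb Q y x) (Finset.mem_univ y1)
  · exact le_refl _

lemma gapSig_nonneg' [Fintype X] [Fintype Y] [Nonempty X] [Nonempty Y] [DecidableEq X]
    (Q : X × Y → ℝ) (g : X → X) (y1 : Y) : 0 ≤ gapSig Q g y1 := by
  obtain ⟨b, hb⟩ := (Finset.univ_nonempty.image g)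
  exact le_trans (gapAt_nonneg' Q b y1)
    (Finset.le_sup' (fun x => gapAt Q x y1) hb)

lemma gapAt_le_gapSig' [Fintype X] [Fintype Y] [Nonempty X] [Nonempty Y] [DecidableEq X]
    (Q : X × Y → ℝ) (g : X → X) (y1 : Y) (x : X) :
    gapAt Q (g x) y1 ≤ gapSig Q g y1 :=
  Finset.le_sup' (fun x => gapAt Q x y1) (Finset.mem_image_of_mem g (Finset.mem_univ x))

lemma marg_nonneg' [Fintype Y] (Q : X × Y → ℝ) (hQ : ∀ z, 0 ≤ Q z) (x : X) :
    0 ≤ marg Q x := Finset.sum_nonneg fun y _ => hQ _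

lemma key_gap_bound [Fintype X] [Fintype Y] [Nonempty Y] (Q : X × Y → ℝ)
    (hQ : ∀ z, 0 ≤ Q z) (x : X) (y' y1 : Y) :
    Q (x, y') - Q (x, y1) ≤ marg Q x * gapAt Q x y1 := by
  unfold gapAt
  by_cases h : 0 < marg Q x
  · rw [if_pos h]
    have hne : marg Q x ≠ 0 := ne_of_gt h
    have h1 : Q (x, y') = marg Q x * condProb Q y' x := by
      unfold condProb; field_simp
    have h2 : Q (x, y1) = marg Q x * condProb Q y1 x := by
      unfold condProb; field_simp
    rw [h1, h2, ← mul_sub]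
    apply mul_le_mul_of_nonneg_left _ h.le
    exact sub_le_sub_right (Finset.le_sup' (fun y => condProb Q y x) (Finset.mem_univ y')) _
  · rw [if_neg h, mul_zero]
    have hm : marg Q x = 0 :=
      le_antisymm (not_lt.mp h) (marg_nonneg' Q hQ x)
    have hz : ∀ y ∈ (Finset.univ : Finset Y), Q (x, y) = 0 :=
      (Finset.sum_eq_zero_iff_of_nonneg (fun y _ => hQ (x, y))).mp hm
    rw [hz y' (Finset.mem_univ _), hz y1 (Finset.mem_univ _)]
    simp

lemma pushforward_eval [Fintype X] [Fintype Y] [DecidableEq X] [DecidableEq Y]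
    (P0 : X × Y → ℝ) (g1 : X → X) (hg1 : Function.Injective g1) (y1 : Y) (x : X) (y : Y) :
    pushforward (fun w => (g1 w.1, y1)) P0 (g1 x, y) =
      if y = y1 then marg P0 x else 0 := by
  unfold pushforward marg
  by_cases hy : y = y1
  · rw [if_pos hy]
    subst hy
    rw [Finset.sum_filter, Fintype.sum_prod_type]
    simp [Prod.ext_iff, hg1.eq_iff]
  · rw [if_neg hy]
    apply Finset.sum_eq_zero
    intro w hw
    simp only [Finset.mem_filter, Finset.mem_univ, true_and, Prod.mk.injEq] at hw
    exact absurd hw.2.symm hy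

lemma marg_pushforward [Fintype X] [Fintype Y] [DecidableEq X] [DecidableEq Y]
    (P0 : X × Y → ℝ) (g1 : X → X) (hg1 : Function.Injective g1) (y1 : Y) (x : X) :
    marg (pushforward (fun w => (g1 w.1, y1)) P0) (g1 x) = marg P0 x := by
  unfold marg
  rw [Finset.sum_congr rfl (fun y _ => pushforward_eval P0 g1 hg1 y1 x y)]
  simp [marg]

/-- success bound, feature-label, ε = 0, two distributions. -/
theorem success_feature_label_eps_zero
    [Fintype X] [Fintype Y] [Nonempty X] [Nonempty Y] [DecidableEq X] [DecidableEq Y]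
    (P0 P2 : X × Y → ℝ) (hP0 : IsPMF P0) (hP2 : IsPMF P2)
    (g1 : X → X) (hg1 : Function.Injective g1) (y1 : Y)
    (P1 : X × Y → ℝ) (hP1 : P1 = pushforward (fun w => (g1 w.1, y1)) P0)
    (α1 α2 : ℝ) (hα1 : 0 < α1) (hα2 : 0 ≤ α2) (hα : α1 + α2 ≤ 1)
    (P : X × Y → ℝ) (hP : P = fun z => α1 * P1 z + α2 * P2 z + (1 - (α1 + α2)) * P0 z)
    (f : X → Y)
    (hf : ∀ x, 0 < marg P x → ∀ y, condProb P y x ≤ condProb P (f x) x) :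
    successRate P0 f g1 y1 ≥
      1 - α2 / α1 * overlap P2 g1 * gapSig P2 g1 y1
        - (1 - (α1 + α2)) / α1 * overlap P0 g1 * gapSig P0 g1 y1 := by
  obtain ⟨hP0n, hP0s⟩ := hP0
  obtain ⟨hP2n, hP2s⟩ := hP2
  set S : Finset X := Finset.univ.filter (fun x => ¬ f (g1 x) = y1) with hS
  -- total mass of the marginal of P0 is 1
  have hmargsum : ∑ x, marg P0 x = 1 := by
    unfold marg; rw [← Fintype.sum_prod_type]; exact hP0s
  have hsplit : successRate P0 f g1 y1 + ∑ x ∈ S, marg P0 x = 1 := by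
    unfold successRate
    rw [hS, Finset.sum_filter_add_sum_filter_not]
    exact hmargsum
  -- pointwise bound on S
  have hpoint : ∀ x ∈ S, marg P0 x ≤
      α2 / α1 * (marg P2 (g1 x) * gapSig P2 g1 y1)
        + (1 - (α1 + α2)) / α1 * (marg P0 (g1 x) * gapSig P0 g1 y1) := by
    intro x hx
    have hxne : f (g1 x) ≠ y1 := by
      simpa [hS, Finset.mem_filter] using hx
    have hg2 : 0 ≤ marg P2 (g1 x) * gapSig P2 g1 y1 :=
      mul_nonneg (marg_nonneg' P2 hP2n _) (gapSig_nonneg' P2 g1 y1)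
    have hg0 : 0 ≤ marg P0 (g1 x) * gapSig P0 g1 y1 :=
      mul_nonneg (marg_nonneg' P0 hP0n _) (gapSig_nonneg' P0 g1 y1)
    have h1α : 0 ≤ 1 - (α1 + α2) := by linarith
    by_cases hpos : 0 < marg P0 x
    · -- marg P (g1 x) > 0
      have hmargP : marg P (g1 x) = α1 * marg P1 (g1 x) + α2 * marg P2 (g1 x)
          + (1 - (α1 + α2)) * marg P0 (g1 x) := by
        subst hP; unfold marg
        simp only [Finset.sum_add_distrib, Finset.mul_sum]
      have hmargP1 : marg P1 (g1 x) = marg P0 x := by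
        rw [hP1]; exact marg_pushforward P0 g1 hg1 y1 x
      have hPpos : 0 < marg P (g1 x) := by
        rw [hmargP, hmargP1]
        have := marg_nonneg' P2 hP2n (g1 x)
        have := marg_nonneg' P0 hP0n (g1 x)
        nlinarith
      have hcond := hf (g1 x) hPpos y1
      have hnum : P (g1 x, y1) ≤ P (g1 x, f (g1 x)) := by
        unfold condProb at hcond
        exact (div_le_div_iff_of_pos_right hPpos).mp hcond
      have hP1y1 : P1 (g1 x, y1) = marg P0 x := by
        rw [hP1, pushforward_eval P0 g1 hg1 y1 x y1, if_pos rfl]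
      have hP1f : P1 (g1 x, f (g1 x)) = 0 := by
        rw [hP1, pushforward_eval P0 g1 hg1 y1 x _, if_neg hxne]
      rw [hP] at hnum
      simp only [hP1y1, hP1f, mul_zero] at hnum
      -- so α1 * marg P0 x ≤ α2 * (P2 diff) + (1-α) * (P0 diff)
      have hd2 : P2 (g1 x, f (g1 x)) - P2 (g1 x, y1)
          ≤ marg P2 (g1 x) * gapAt P2 (g1 x) y1 :=
        key_gap_bound P2 hP2n (g1 x) (f (g1 x)) y1
      have hd0 : P0 (g1 x, f (g1 x)) - P0 (g1 x, y1)
          ≤ marg P0 (g1 x) * gapAt P0 (g1 x) y1 :=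
        key_gap_bound P0 hP0n (g1 x) (f (g1 x)) y1
      have hgap2 : marg P2 (g1 x) * gapAt P2 (g1 x) y1
          ≤ marg P2 (g1 x) * gapSig P2 g1 y1 :=
        mul_le_mul_of_nonneg_left (gapAt_le_gapSig' P2 g1 y1 x)
          (marg_nonneg' P2 hP2n _)
      have hgap0 : marg P0 (g1 x) * gapAt P0 (g1 x) y1
          ≤ marg P0 (g1 x) * gapSig P0 g1 y1 :=
        mul_le_mul_of_nonneg_left (gapAt_le_gapSig' P0 g1 y1 x)
          (marg_nonneg' P0 hP0n _)
      have hα1' : α1 * marg P0 x ≤ α2 * (marg P2 (g1 x) * gapSig P2 g1 y1)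
          + (1 - (α1 + α2)) * (marg P0 (g1 x) * gapSig P0 g1 y1) := by
        nlinarith [mul_le_mul_of_nonneg_left (hd2.trans hgap2) hα2,
          mul_le_mul_of_nonneg_left (hd0.trans hgap0) h1α]
      rw [div_mul_eq_mul_div, div_mul_eq_mul_div, ← add_div, le_div_iff₀ hα1]
      linarith [hα1']
    · push_neg at hpos
      have : marg P0 x = 0 := le_antisymm hpos (marg_nonneg' P0 hP0n x)
      rw [this]
      positivity
  -- sum the pointwise bound
  have hsum2 : ∑ x ∈ S, marg P2 (g1 x) ≤ overlap P2 g1 := by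
    rw [← Finset.sum_image (fun x _ y _ h => hg1 h)]
    exact Finset.sum_le_sum_of_subset_of_nonneg
      (Finset.image_subset_image (Finset.subset_univ S))
      (fun x _ _ => marg_nonneg' P2 hP2n x)
  have hsum0 : ∑ x ∈ S, marg P0 (g1 x) ≤ overlap P0 g1 := by
    rw [← Finset.sum_image (fun x _ y _ h => hg1 h)]
    exact Finset.sum_le_sum_of_subset_of_nonneg
      (Finset.image_subset_image (Finset.subset_univ S))
      (fun x _ _ => marg_nonneg' P0 hP0n x)
  have hc2 : 0 ≤ α2 / α1 * gapSig P2 g1 y1 :=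
    mul_nonneg (div_nonneg hα2 hα1.le) (gapSig_nonneg' P2 g1 y1)
  have hc0 : 0 ≤ (1 - (α1 + α2)) / α1 * gapSig P0 g1 y1 :=
    mul_nonneg (div_nonneg (by linarith) hα1.le) (gapSig_nonneg' P0 g1 y1)
  have hfinal : ∑ x ∈ S, marg P0 x ≤
      α2 / α1 * overlap P2 g1 * gapSig P2 g1 y1
        + (1 - (α1 + α2)) / α1 * overlap P0 g1 * gapSig P0 g1 y1 := by
    calc ∑ x ∈ S, marg P0 x
        ≤ ∑ x ∈ S, (α2 / α1 * (marg P2 (g1 x) * gapSig P2 g1 y1)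
            + (1 - (α1 + α2)) / α1 * (marg P0 (g1 x) * gapSig P0 g1 y1)) :=
          Finset.sum_le_sum hpoint
      _ = (α2 / α1 * gapSig P2 g1 y1) * (∑ x ∈ S, marg P2 (g1 x))
            + ((1 - (α1 + α2)) / α1 * gapSig P0 g1 y1) * (∑ x ∈ S, marg P0 (g1 x)) := by
          rw [Finset.sum_add_distrib, Finset.mul_sum, Finset.mul_sum]
          congr 1 <;> exact Finset.sum_congr rfl (fun x _ => by ring)
      _ ≤ (α2 / α1 * gapSig P2 g1 y1) * overlap P2 g1
            + ((1 - (α1 + α2)) / α1 * gapSig P0 g1 y1) * overlap P0 g1 := by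
          gcongr
      _ = _ := by ring
  linarith
end
end
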